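/- arXiv:2601.17565 — 2 statements merged into one kernel-verified Lean document; each statement's English description precedes it below -/
import Mathlib

section
/- For the comonotonicity copula M_d and a direction α ∈ {−1,1}^d having k coordinates equal to −1 with 0 < k < d, the directional Spearman footrule coefficient satisfies φ_d^α(M_d) = −2 / ((d−1) · C(d,k)). -/
open MeasureTheory

lemma beta_nat (a b : ℕ) :
    ∫ x in (0:ℝ)..1, x ^ a * (1 - x) ^ b
      = (a.factorial * b.factorial : ℝ) / (a + b + 1).factorial := by
  have hb : Complex.betaIntegral (a + 1) (b + 1)
      = ((∫ x in (0:ℝ)..1, x ^ a * (1 - x) ^ b : ℝ) : ℂ) := by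
    rw [Complex.betaIntegral, ← intervalIntegral.integral_ofReal]
    refine intervalIntegral.integral_congr fun x _ => ?_
    simp only [add_sub_cancel_right, Complex.cpow_natCast, Complex.ofReal_mul,
      Complex.ofReal_pow, Complex.ofReal_sub, Complex.ofReal_one]
  have hG := Complex.Gamma_mul_Gamma_eq_betaIntegral
    (s := (a + 1 : ℂ)) (t := (b + 1 : ℂ)) (by simp; positivity) (by simp; positivity)
  rw [Complex.Gamma_nat_eq_factorial, Complex.Gamma_nat_eq_factorial] at hG
  have h2 : ((a:ℂ) + 1 + ((b:ℂ) + 1)) = ((a + b + 1 : ℕ) : ℂ) + 1 := by push_cast; ring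
  rw [h2, Complex.Gamma_nat_eq_factorial, hb] at hG
  have hne : ((a + b + 1).factorial : ℂ) ≠ 0 := by
    exact_mod_cast Nat.cast_ne_zero.mpr (a + b + 1).factorial_ne_zero
  have : ((∫ x in (0:ℝ)..1, x ^ a * (1 - x) ^ b : ℝ) : ℂ)
      = ((a.factorial * b.factorial : ℝ) / (a + b + 1).factorial : ℝ) := by
    push_cast
    rw [eq_div_iff hne]
    linear_combination -hG
  exact_mod_cast this

/-- For the comonotonicity copula `M_d` and a direction `α ∈ {−1,1}^d` with `k` coordinates
equal to `−1`, `0 < k < d`, the directional Spearman footrule coefficient equals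
`−2 / ((d−1)·C(d,k))`. -/
theorem stmt6 {Ω : Type*} [MeasurableSpace Ω] (μ : Measure Ω) [IsProbabilityMeasure μ]
    (d : ℕ) (hd : 2 ≤ d) (U : Ω → ℝ) (hmeas : Measurable U)
    (hunif : μ.map U = volume.restrict (Set.Icc (0 : ℝ) 1))
    (V : Fin d → Ω → ℝ) (hV : ∀ i, V i = U)
    (α : Fin d → ℝ) (hα : ∀ i, α i = 1 ∨ α i = -1)
    (k : ℕ) (hk : k = (Finset.univ.filter fun i => α i = -1).card)
    (hk0 : 0 < k) (hkd : k < d) :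
    (2 * ((d : ℝ) + 1) / ((d : ℝ) - 1)) *
      ∫ u in (0 : ℝ)..1,
        ((μ {ω | ∀ i, α i * V i ω > α i * u}).toReal
          - ∏ i, (μ {ω | α i * V i ω > α i * u}).toReal)
      = -2 / (((d : ℝ) - 1) * (d.choose k : ℝ)) := by
  classical
  -- a coordinate with α = -1 and one with α = 1
  obtain ⟨i0, hi0⟩ : ∃ i, α i = -1 := by
    have : (Finset.univ.filter fun i => α i = -1).Nonempty :=
      Finset.card_pos.mp (by omega)
    obtain ⟨i, hi⟩ := this
    exact ⟨i, (Finset.mem_filter.mp hi).2⟩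
  obtain ⟨j0, hj0⟩ : ∃ j, α j = 1 := by
    by_contra h
    push_neg at h
    have hall : (Finset.univ.filter fun i => α i = -1) = Finset.univ := by
      refine Finset.filter_true_of_mem fun i _ => ?_
      rcases hα i with h1 | h1
      · exact absurd h1 (h i)
      · exact h1
    rw [hall, Finset.card_univ, Fintype.card_fin] at hk
    omega
  -- the joint event is empty
  have hjoint : ∀ u : ℝ, {ω | ∀ i, α i * V i ω > α i * u} = (∅ : Set Ω) := by
    intro u
    ext ω
    simp only [Set.mem_setOf_eq, Set.mem_empty_iff_false, iff_false, not_forall]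
    by_contra h
    push_neg at h
    have h1 := h i0
    have h2 := h j0
    rw [hV, hi0] at h1
    rw [hV, hj0] at h2
    nlinarith
  -- measures of the marginal events
  have hgt : ∀ u ∈ Set.Icc (0:ℝ) 1, (μ {ω | U ω > u}).toReal = 1 - u := by
    intro u hu
    have : {ω | U ω > u} = U ⁻¹' Set.Ioi u := rfl
    rw [this, ← Measure.map_apply hmeas measurableSet_Ioi, hunif,
      Measure.restrict_apply measurableSet_Ioi]
    have hset : Set.Ioi u ∩ Set.Icc (0:ℝ) 1 = Set.Ioc u 1 := by
      ext x
      simp only [Set.mem_inter_iff, Set.mem_Ioi, Set.mem_Icc, Set.mem_Ioc]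
      constructor
      · rintro ⟨h1, h2, h3⟩; exact ⟨h1, h3⟩
      · rintro ⟨h1, h2⟩; exact ⟨h1, by linarith [hu.1], h2⟩
    rw [hset, Real.volume_Ioc, ENNReal.toReal_ofReal (by linarith [hu.2])]
  have hlt : ∀ u ∈ Set.Icc (0:ℝ) 1, (μ {ω | U ω < u}).toReal = u := by
    intro u hu
    have : {ω | U ω < u} = U ⁻¹' Set.Iio u := rfl
    rw [this, ← Measure.map_apply hmeas measurableSet_Iio, hunif,
      Measure.restrict_apply measurableSet_Iio]
    have hset : Set.Iio u ∩ Set.Icc (0:ℝ) 1 = Set.Ico 0 u := by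
      ext x
      simp only [Set.mem_inter_iff, Set.mem_Iio, Set.mem_Icc, Set.mem_Ico]
      constructor
      · rintro ⟨h1, h2, h3⟩; exact ⟨h2, h1⟩
      · rintro ⟨h1, h2⟩; exact ⟨h2, h1, by linarith [hu.2]⟩
    rw [hset, Real.volume_Ico, ENNReal.toReal_ofReal (by linarith [hu.1]), sub_zero]
  -- the product of marginals
  have hcardneg : (Finset.univ.filter fun i => ¬ (α i = -1)).card = d - k := by
    have := Finset.card_filter_add_card_filter_not
      (s := (Finset.univ : Finset (Fin d))) (p := fun i => α i = -1)
    rw [Finset.card_univ, Fintype.card_fin] at this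
    omega
  have hprod : ∀ u ∈ Set.Icc (0:ℝ) 1,
      (∏ i, (μ {ω | α i * V i ω > α i * u}).toReal) = u ^ k * (1 - u) ^ (d - k) := by
    intro u hu
    have hfac : ∀ i, (μ {ω | α i * V i ω > α i * u}).toReal
        = if α i = -1 then u else 1 - u := by
      intro i
      rcases hα i with h1 | h1
      · have hset : {ω | α i * V i ω > α i * u} = {ω | U ω > u} := by
          ext ω; simp [h1, hV i]
        rw [hset, hgt u hu, if_neg (by rw [h1]; norm_num)]
      · have hset : {ω | α i * V i ω > α i * u} = {ω | U ω < u} := by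
          ext ω
          simp only [Set.mem_setOf_eq, h1, hV i]
          constructor <;> intro h <;> nlinarith
        rw [hset, hlt u hu, if_pos h1]
    calc (∏ i, (μ {ω | α i * V i ω > α i * u}).toReal)
        = ∏ i, (if α i = -1 then u else 1 - u) := by
          exact Finset.prod_congr rfl fun i _ => hfac i
      _ = u ^ k * (1 - u) ^ (d - k) := by
          rw [Finset.prod_ite, Finset.prod_const, Finset.prod_const, ← hk, hcardneg]
  -- rewrite the integral
  have hint : (∫ u in (0 : ℝ)..1,
        ((μ {ω | ∀ i, α i * V i ω > α i * u}).toReal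
          - ∏ i, (μ {ω | α i * V i ω > α i * u}).toReal))
      = - ((k.factorial * (d - k).factorial : ℝ) / (k + (d - k) + 1).factorial) := by
    rw [← beta_nat k (d - k), ← intervalIntegral.integral_neg]
    refine intervalIntegral.integral_congr fun u hu => ?_
    rw [Set.uIcc_of_le (by norm_num)] at hu
    rw [hjoint u, hprod u hu]
    simp
  rw [hint]
  -- final arithmetic
  have hdk : k + (d - k) + 1 = d + 1 := by omega
  rw [hdk]
  have key : ((d.choose k : ℝ)) * (k.factorial : ℝ) * ((d - k).factorial : ℝ)
      = (d.factorial : ℝ) := by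
    exact_mod_cast congrArg (Nat.cast (R := ℝ))
      (Nat.choose_mul_factorial_mul_factorial hkd.le)
  have hfacsucc : ((d + 1).factorial : ℝ) = ((d : ℝ) + 1) * (d.factorial : ℝ) := by
    rw [Nat.factorial_succ]; push_cast; ring
  have h1 : ((d:ℝ) - 1) ≠ 0 := by
    have : (2:ℝ) ≤ (d:ℝ) := by exact_mod_cast hd
    intro h; nlinarith
  have h2 : (0:ℝ) < (d.choose k : ℝ) := by
    exact_mod_cast Nat.choose_pos hkd.le
  have h2' : (d.choose k : ℝ) ≠ 0 := ne_of_gt h2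
  have h3 : ((d + 1).factorial : ℝ) ≠ 0 := by
    exact_mod_cast (d + 1).factorial_ne_zero
  have h4 : ((d:ℝ) + 1) ≠ 0 := by positivity
  field_simp
  rw [hfacsucc]
  ring_nf
  nlinarith [key]
end

section
/- Let U = (U_1,...,U_d), d ≥ 2, with uniform [0,1] marginals and copula C. Then the sum over all 2^d directions α ∈ {−1,1}^d of the directional footrule coefficients is zero: ∑_α φ_d^α(C) = 0. -/
open MeasureTheory

/-- For a `d`-dimensional random vector with uniform `[0,1]` marginals (`d ≥ 2`),
the sum over all `2^d` directions `α ∈ {−1,1}^d` of the directional footrule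
coefficients is zero. -/
theorem stmt8 {Ω : Type*} [MeasurableSpace Ω] (μ : Measure Ω) [IsProbabilityMeasure μ]
    (d : ℕ) (hd : 2 ≤ d) (U : Fin d → Ω → ℝ) (hmeas : ∀ i, Measurable (U i))
    (hunif : ∀ i, μ.map (U i) = volume.restrict (Set.Icc (0 : ℝ) 1)) :
    ∑ α ∈ Fintype.piFinset (fun _ : Fin d => ({-1, 1} : Finset ℝ)),
      (2 * ((d : ℝ) + 1) / ((d : ℝ) - 1)) *
        ∫ u in (0 : ℝ)..1,
          ((μ {ω | ∀ i, α i * U i ω > α i * u}).toReal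
            - ∏ i, (μ {ω | α i * U i ω > α i * u}).toReal) = 0 := by
  classical
  set s := Fintype.piFinset (fun _ : Fin d => ({-1, 1} : Finset ℝ)) with hsdef
  -- singleton preimages are null
  have hnull : ∀ (i : Fin d) (u : ℝ), μ (U i ⁻¹' {u} : Set Ω) = 0 := by
    intro i u
    rw [← Measure.map_apply (hmeas i) (measurableSet_singleton u), hunif i,
      Measure.restrict_apply (measurableSet_singleton u)]
    exact measure_mono_null Set.inter_subset_left Real.volume_singleton
  have hne : ∀ (i : Fin d) (u : ℝ), μ {ω | U i ω ≠ u} = 1 := by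
    intro i u
    have hc : μ ({ω | U i ω ≠ u}ᶜ) = 0 := by
      have he : ({ω | U i ω ≠ u}ᶜ : Set Ω) = U i ⁻¹' {u} := by ext ω; simp
      rw [he]; exact hnull i u
    rw [measure_congr (ae_eq_univ.mpr hc), measure_univ]

  -- values of α coordinates
  have hval : ∀ α ∈ s, ∀ i : Fin d, α i = -1 ∨ α i = 1 := by
    intro α hα i
    have := Fintype.mem_piFinset.mp hα i
    simpa using this
  -- pointwise sum of joint probabilities is 1
  have hsum1 : ∀ u : ℝ, ∑ α ∈ s,
      (μ {ω | ∀ i, α i * U i ω > α i * u}).toReal = 1 := by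
    intro u
    have hmA : ∀ α : Fin d → ℝ, MeasurableSet {ω | ∀ i, α i * U i ω > α i * u} := by
      intro α
      have he : {ω | ∀ i, α i * U i ω > α i * u} = ⋂ i, {ω | α i * u < α i * U i ω} := by
        ext ω; simp [Set.mem_iInter]
      rw [he]
      exact MeasurableSet.iInter fun i =>
        measurableSet_lt measurable_const ((hmeas i).const_mul _)
    have hdisj : (↑s : Set (Fin d → ℝ)).PairwiseDisjoint
        (fun α => {ω | ∀ i, α i * U i ω > α i * u}) := by
      intro α hα β hβ hne'
      simp only [Function.onFun, Set.disjoint_left]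
      intro ω hωα hωβ
      obtain ⟨i, hi⟩ := Function.ne_iff.mp hne'
      have h1 := hωα i
      have h2 := hωβ i
      rcases hval α hα i with ha | ha <;> rcases hval β hβ i with hb | hb <;>
        rw [ha] at h1 <;> rw [hb] at h2 <;> simp_all <;> linarith
    have hcov : (⋃ α ∈ s, {ω | ∀ i, α i * U i ω > α i * u}) = {ω | ∀ i, U i ω ≠ u} := by
      ext ω
      simp only [Set.mem_iUnion, Set.mem_setOf_eq]
      constructor
      · rintro ⟨α, hα, hA⟩ i
        intro hequ
        have := hA i
        rw [hequ] at this
        exact lt_irrefl _ this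
      · intro h
        refine ⟨fun i => if U i ω > u then 1 else -1, ?_, ?_⟩
        · rw [hsdef, Fintype.mem_piFinset]
          intro i
          split_ifs <;> simp
        · intro i
          by_cases hgt : U i ω > u
          · simp only [if_pos hgt]; linarith
          · simp only [if_neg hgt]
            have : U i ω < u := lt_of_le_of_ne (not_lt.mp hgt) (h i)
            nlinarith
    have hμcov : μ (⋃ α ∈ s, {ω | ∀ i, α i * U i ω > α i * u}) = 1 := by
      rw [hcov]
      have hc : μ ({ω | ∀ i, U i ω ≠ u}ᶜ) = 0 := by
        refine measure_mono_null ?_ (measure_iUnion_null fun i => hnull i u)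
        intro ω hω
        simp only [Set.mem_compl_iff, Set.mem_setOf_eq, not_forall, not_not] at hω
        obtain ⟨i, hi⟩ := hω
        exact Set.mem_iUnion.mpr ⟨i, hi⟩
      rw [measure_congr (ae_eq_univ.mpr hc), measure_univ]
    rw [← ENNReal.toReal_sum (fun α _ => measure_ne_top μ _),
      ← measure_biUnion_finset hdisj (fun α _ => hmA α), hμcov, ENNReal.toReal_one]
  -- pointwise sum of products is 1
  have hsum2 : ∀ u : ℝ, ∑ α ∈ s,
      ∏ i, (μ {ω | α i * U i ω > α i * u}).toReal = 1 := by
    intro u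
    have hps := Finset.prod_univ_sum (fun _ : Fin d => ({-1, 1} : Finset ℝ))
      (fun i a => (μ {ω | a * U i ω > a * u}).toReal)
    rw [hsdef, ← hps]
    have hfac : ∀ i : Fin d,
        (∑ a ∈ ({-1, 1} : Finset ℝ), (μ {ω | a * U i ω > a * u}).toReal) = 1 := by
      intro i
      rw [Finset.sum_pair (by norm_num : (-1 : ℝ) ≠ 1)]
      have he1 : {ω | (-1 : ℝ) * U i ω > -1 * u} = {ω | U i ω < u} := by
        ext ω; constructor <;> intro h <;> simp only [Set.mem_setOf_eq] at * <;> linarith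
      have he2 : {ω | (1 : ℝ) * U i ω > 1 * u} = {ω | u < U i ω} := by
        ext ω; constructor <;> intro h <;> simp only [Set.mem_setOf_eq] at * <;> linarith
      rw [he1, he2, ← ENNReal.toReal_add (measure_ne_top μ _) (measure_ne_top μ _),
        ← measure_union (by
          rw [Set.disjoint_left]; intro ω h1 h2
          simp only [Set.mem_setOf_eq] at h1 h2; linarith)
          (measurableSet_lt measurable_const (hmeas i))]
      have he3 : ({ω | U i ω < u} ∪ {ω | u < U i ω}) = {ω | U i ω ≠ u} := by
        ext ω
        simp only [Set.mem_union, Set.mem_setOf_eq, ne_eq]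
        exact lt_or_lt_iff_ne
      rw [he3, hne i u, ENNReal.toReal_one]
    rw [Finset.prod_congr rfl (fun i _ => hfac i), Finset.prod_const_one]
  -- measurability of the integrands
  have hm1 : ∀ α : Fin d → ℝ,
      Measurable (fun u => (μ {ω | ∀ i, α i * U i ω > α i * u}).toReal) := by
    intro α
    have hS : MeasurableSet {p : ℝ × Ω | ∀ i, α i * U i p.2 > α i * p.1} := by
      have he : {p : ℝ × Ω | ∀ i, α i * U i p.2 > α i * p.1}
          = ⋂ i, {p : ℝ × Ω | α i * p.1 < α i * U i p.2} := by
        ext p; simp [Set.mem_iInter]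
      rw [he]
      exact MeasurableSet.iInter fun i =>
        measurableSet_lt (measurable_fst.const_mul _) (((hmeas i).comp measurable_snd).const_mul _)
    exact (measurable_measure_prodMk_left hS).ennreal_toReal
  have hm2 : ∀ α : Fin d → ℝ,
      Measurable (fun u => ∏ i, (μ {ω | α i * U i ω > α i * u}).toReal) := by
    intro α
    apply Finset.measurable_prod
    intro i _
    have hS : MeasurableSet {p : ℝ × Ω | α i * U i p.2 > α i * p.1} :=
      measurableSet_lt (measurable_fst.const_mul _) (((hmeas i).comp measurable_snd).const_mul _)
    exact (measurable_measure_prodMk_left hS).ennreal_toReal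
  -- bounds
  have hle1 : ∀ t : Set Ω, (μ t).toReal ≤ 1 := by
    intro t
    rw [← ENNReal.toReal_one]
    exact ENNReal.toReal_mono ENNReal.one_ne_top prob_le_one
  -- interval integrability from boundedness
  have hii : ∀ f : ℝ → ℝ, Measurable f → (∀ u, |f u| ≤ 1) →
      IntervalIntegrable f volume 0 1 := by
    intro f hf hb
    rw [intervalIntegrable_iff, Set.uIoc_of_le (zero_le_one' ℝ)]
    haveI : IsFiniteMeasure (volume.restrict (Set.Ioc (0:ℝ) 1)) := by
      constructor
      rw [Measure.restrict_apply_univ]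
      simp
    exact ⟨hf.aestronglyMeasurable.restrict,
      HasFiniteIntegral.of_bounded (C := 1) (ae_of_all _ fun u => by
        simpa using hb u)⟩
  have hint : ∀ α ∈ s, IntervalIntegrable
      (fun u => (μ {ω | ∀ i, α i * U i ω > α i * u}).toReal
        - ∏ i, (μ {ω | α i * U i ω > α i * u}).toReal) volume 0 1 := by
    intro α _
    apply IntervalIntegrable.sub
    · exact hii _ (hm1 α) fun u => by
        rw [abs_of_nonneg ENNReal.toReal_nonneg]; exact hle1 _
    · refine hii _ (hm2 α) fun u => ?_
      rw [abs_of_nonneg (Finset.prod_nonneg fun i _ => ENNReal.toReal_nonneg)]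
      exact Finset.prod_le_one (fun i _ => ENNReal.toReal_nonneg) (fun i _ => hle1 _)
  -- assemble
  rw [← Finset.mul_sum, ← intervalIntegral.integral_finset_sum hint]
  have hz : ∀ u : ℝ, ∑ α ∈ s,
      ((μ {ω | ∀ i, α i * U i ω > α i * u}).toReal
        - ∏ i, (μ {ω | α i * U i ω > α i * u}).toReal) = 0 := by
    intro u
    rw [Finset.sum_sub_distrib, hsum1 u, hsum2 u, sub_self]
  rw [intervalIntegral.integral_congr (g := fun _ => (0 : ℝ)) (fun u _ => hz u)]
  simp
end
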